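/- arXiv:2104.12318 — 4 statements merged into one kernel-verified Lean document; each statement's English description precedes it below -/
import Mathlib

section
/- In a simply-laced Coxeter system, if a reduced expression α for an element w has a braid shadow at positions ⟦i, i+2⟧ in some reduced expression braid-equivalent to α, then no reduced expression braid-equivalent to α has a braid shadow at positions ⟦i+1, i+3⟧. That is, braid shadows of a braid class cannot overlap in two consecutive positions. -/
open List

namespace BraidFormal

variable {B : Type*}

/-- A single braid move: replace a factor `s t s` with `t s t` where `m(s,t) = 3`. -/
def IsBraidMove (M : CoxeterMatrix B) (w w' : List B) : Prop :=
  ∃ (u v : List B) (s t : B), M s t = 3 ∧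
    w = u ++ [s, t, s] ++ v ∧ w' = u ++ [t, s, t] ++ v

/-- Braid equivalence: the reflexive-transitive closure of braid moves. -/
def BraidEquiv (M : CoxeterMatrix B) : List B → List B → Prop :=
  Relation.ReflTransGen (IsBraidMove M)

/-- The braid class of a word. -/
def BraidClass (M : CoxeterMatrix B) (α : List B) : Set (List B) :=
  {β | BraidEquiv M α β}

/-- `w` has a braid shadow at (0-based) positions `i, i+1, i+2`:
the letters there are `s, t, s` with `m(s,t) = 3`.
(This corresponds to the 1-based interval `⟦i+1, i+3⟧` of the paper.) -/
def HasShadowAt (M : CoxeterMatrix B) (w : List B) (i : ℕ) : Prop :=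
  ∃ s t : B, M s t = 3 ∧ w[i]? = some s ∧ w[i+1]? = some t ∧ w[i+2]? = some s

/-- The braid class of `α` has a braid shadow at position `i`. -/
def ClassHasShadowAt (M : CoxeterMatrix B) (α : List B) (i : ℕ) : Prop :=
  ∃ β ∈ BraidClass M α, HasShadowAt M β i

/-- The rank of a reduced expression: the number of braid shadows of its braid class. -/
noncomputable def rank (M : CoxeterMatrix B) (α : List B) : ℕ :=
  Set.ncard {i | ClassHasShadowAt M α i}

/-- A Coxeter matrix is simply laced if all entries are at most 3. -/
def SimplyLaced (M : CoxeterMatrix B) : Prop := ∀ s t : B, M s t ≤ 3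

/-- A Coxeter matrix is triangle free if its Coxeter graph has no three-cycles
(all of whose edges are labelled 3). -/
def TriangleFree (M : CoxeterMatrix B) : Prop :=
  ∀ s t u : B, s ≠ t → t ≠ u → s ≠ u → M s t = 3 → M t u = 3 → M s u ≠ 3

/-- The set of generators appearing in (0-based) position `k` of some word in the
braid class of `α`. -/
def classSupp (M : CoxeterMatrix B) (α : List B) (k : ℕ) : Set B :=
  {s | ∃ β ∈ BraidClass M α, β[k]? = some s}

/-- The set of generators appearing in (0-based) positions `i` through `j` of `w`. -/
def suppInterval (w : List B) (i j : ℕ) : Set B :=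
  {s | ∃ k, i ≤ k ∧ k ≤ j ∧ w[k]? = some s}

variable {W : Type*} [Group W] {M : CoxeterMatrix B}

/-- `α` is a link of rank `r`: a reduced expression of length `2r+1` whose braid class
has braid shadows exactly at the (0-based) positions `0, 2, 4, …, 2r-2`
(the 1-based intervals `⟦1,3⟧, ⟦3,5⟧, …, ⟦2r-1,2r+1⟧`). -/
def IsLink (cs : CoxeterSystem M W) (α : List B) (r : ℕ) : Prop :=
  cs.IsReduced α ∧ α.length = 2 * r + 1 ∧
    ∀ i : ℕ, ClassHasShadowAt M α i ↔ ∃ j < r, i = 2 * j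

/-- A Fibonacci link: a link all of whose braid-class braid shadows are braid shadows
of the link itself. -/
def IsFibLink (cs : CoxeterSystem M W) (φ : List B) (r : ℕ) : Prop :=
  IsLink cs φ r ∧ ∀ i : ℕ, ClassHasShadowAt M φ i → HasShadowAt M φ i


/-! ### Auxiliary machinery for `statement_0` -/

section NoOverlapProof

variable {B₀ : Type*} {W₀ : Type*} [Group W₀] {M₀ : CoxeterMatrix B₀}

/-- A braid move at a specified (0-based) position `j`. -/
def MoveAt (M : CoxeterMatrix B₀) (j : ℕ) (w w' : List B₀) : Prop :=
  ∃ (u v : List B₀) (s t : B₀), u.length = j ∧ M s t = 3 ∧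
    w = u ++ [s, t, s] ++ v ∧ w' = u ++ [t, s, t] ++ v

/-- Paths of braid moves all of whose positions satisfy `P`. -/
inductive PathP (M : CoxeterMatrix B₀) (P : ℕ → Prop) : ℕ → List B₀ → List B₀ → Prop
  | refl (w : List B₀) : PathP M P 0 w w
  | cons {j n : ℕ} {w δ γ : List B₀} (hj : P j) (hm : MoveAt M j w δ)
      (hp : PathP M P n δ γ) : PathP M P (n + 1) w γ

lemma isBraidMove_iff_moveAt {w w' : List B₀} :
    IsBraidMove M₀ w w' ↔ ∃ j, MoveAt M₀ j w w' := by
  constructor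
  · rintro ⟨u, v, s, t, h3, h1, h2⟩
    exact ⟨u.length, u, v, s, t, rfl, h3, h1, h2⟩
  · rintro ⟨j, u, v, s, t, -, h3, h1, h2⟩
    exact ⟨u, v, s, t, h3, h1, h2⟩

namespace MoveAt

variable {j : ℕ} {w w' : List B₀}

lemma symm (h : MoveAt M₀ j w w') : MoveAt M₀ j w' w := by
  obtain ⟨u, v, s, t, hu, h3, h1, h2⟩ := h
  exact ⟨u, v, t, s, hu, (M₀.symmetric s t) ▸ h3, h2, h1⟩

lemma length_eq (h : MoveAt M₀ j w w') : w'.length = w.length := by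
  obtain ⟨u, v, s, t, hu, h3, rfl, rfl⟩ := h
  simp

lemma getElem?_lt (h : MoveAt M₀ j w w') {l : ℕ} (hl : l < j) : w'[l]? = w[l]? := by
  obtain ⟨u, v, s, t, hu, h3, rfl, rfl⟩ := h
  have hu3 : (u ++ [s, t, s]).length = j + 3 := by simp [hu]
  have hu3' : (u ++ [t, s, t]).length = j + 3 := by simp [hu]
  rw [List.getElem?_append_left (by omega : l < (u ++ [t, s, t]).length),
    List.getElem?_append_left (by omega : l < u.length),
    List.getElem?_append_left (by omega : l < (u ++ [s, t, s]).length),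
    List.getElem?_append_left (by omega : l < u.length)]

lemma getElem?_ge (h : MoveAt M₀ j w w') {l : ℕ} (hl : j + 3 ≤ l) : w'[l]? = w[l]? := by
  obtain ⟨u, v, s, t, hu, h3, rfl, rfl⟩ := h
  have hu3 : (u ++ [s, t, s]).length = j + 3 := by simp [hu]
  have hu3' : (u ++ [t, s, t]).length = j + 3 := by simp [hu]
  rw [List.getElem?_append_right (by omega : (u ++ [t, s, t]).length ≤ l),
    List.getElem?_append_right (by omega : (u ++ [s, t, s]).length ≤ l), hu3, hu3']

lemma src_cells (h : MoveAt M₀ j w w') :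
    ∃ s t : B₀, M₀ s t = 3 ∧ w[j]? = some s ∧ w[j+1]? = some t ∧ w[j+2]? = some s ∧
      w'[j]? = some t ∧ w'[j+1]? = some s ∧ w'[j+2]? = some t := by
  obtain ⟨u, v, s, t, hu, h3, rfl, rfl⟩ := h
  have hu3 : (u ++ [s, t, s]).length = j + 3 := by simp [hu]
  have hu3' : (u ++ [t, s, t]).length = j + 3 := by simp [hu]
  refine ⟨s, t, h3, ?_, ?_, ?_, ?_, ?_, ?_⟩ <;>
  · rw [List.getElem?_append_left (by omega), List.getElem?_append_right (by omega : u.length ≤ _)]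
    simp [hu]

lemma shadow_src (h : MoveAt M₀ j w w') : HasShadowAt M₀ w j := by
  obtain ⟨s, t, h3, c1, c2, c3, -, -, -⟩ := h.src_cells
  exact ⟨s, t, h3, c1, c2, c3⟩

lemma shadow_tgt (h : MoveAt M₀ j w w') : HasShadowAt M₀ w' j :=
  h.symm.shadow_src

lemma take_eq (h : MoveAt M₀ j w w') {d : ℕ} (hd : d ≤ j) : w'.take d = w.take d := by
  obtain ⟨u, v, s, t, hu, h3, rfl, rfl⟩ := h
  have hu3 : (u ++ [s, t, s]).length = j + 3 := by simp [hu]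
  have hu3' : (u ++ [t, s, t]).length = j + 3 := by simp [hu]
  rw [List.take_append_of_le_length (by omega : d ≤ (u ++ [t, s, t]).length),
    List.take_append_of_le_length (by omega : d ≤ u.length),
    List.take_append_of_le_length (by omega : d ≤ (u ++ [s, t, s]).length),
    List.take_append_of_le_length (by omega : d ≤ u.length)]

lemma drop_eq (h : MoveAt M₀ j w w') {d : ℕ} (hd : j + 3 ≤ d) : w'.drop d = w.drop d := by
  apply List.ext_getElem?
  intro l
  rw [List.getElem?_drop, List.getElem?_drop]
  exact h.getElem?_ge (by omega)

lemma transport (h : MoveAt M₀ j w w') {d : ℕ} (hd : d ≤ j) (p : List B₀)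
    (hp : p.length = d) : MoveAt M₀ j (p ++ w.drop d) (p ++ w'.drop d) := by
  obtain ⟨u, v, s, t, hu, h3, rfl, rfl⟩ := h
  have hu3 : (u ++ [s, t, s]).length = j + 3 := by simp [hu]
  have hu3' : (u ++ [t, s, t]).length = j + 3 := by simp [hu]
  refine ⟨p ++ u.drop d, v, s, t, by simp [hp]; omega, h3, ?_, ?_⟩ <;>
  · rw [List.drop_append_of_le_length (by omega : d ≤ (u ++ _).length),
      List.drop_append_of_le_length (by omega : d ≤ u.length)]
    simp [List.append_assoc]

end MoveAt

namespace PathP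

variable {P : ℕ → Prop} {n : ℕ} {w w' w'' : List B₀}

lemma length_eq (h : PathP M₀ P n w w') : w'.length = w.length := by
  induction h with
  | refl w => rfl
  | cons hj hm hp ih => rw [ih, hm.length_eq]

lemma cast {n' : ℕ} (e : n = n') (h : PathP M₀ P n w w') : PathP M₀ P n' w w' := e ▸ h

lemma snoc {j : ℕ} (h : PathP M₀ P n w w') (hj : P j) (hm : MoveAt M₀ j w' w'') :
    PathP M₀ P (n + 1) w w'' := by
  induction h with
  | refl w => exact PathP.cons hj hm (PathP.refl _)
  | cons hj' hm' hp ih => exact PathP.cons hj' hm' (ih hm)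

lemma symm (h : PathP M₀ P n w w') : PathP M₀ P n w' w := by
  induction h with
  | refl w => exact PathP.refl w
  | cons hj hm hp ih => exact ih.snoc hj hm.symm

lemma append {m : ℕ} (h : PathP M₀ P n w w') (h' : PathP M₀ P m w' w'') :
    PathP M₀ P (n + m) w w'' := by
  induction h with
  | refl w => exact h'.cast (Nat.zero_add m).symm
  | cons hj hm hp ih => exact (PathP.cons hj hm (ih h')).cast (by omega)

lemma mono {Q : ℕ → Prop} (hPQ : ∀ j, P j → Q j) (h : PathP M₀ P n w w') :
    PathP M₀ Q n w w' := by
  induction h with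
  | refl w => exact PathP.refl w
  | cons hj hm hp ih => exact PathP.cons (hPQ _ hj) hm ih

end PathP

lemma braidEquiv_pathP {α β : List B₀} (h : BraidEquiv M₀ α β) :
    ∃ n, PathP M₀ (fun _ => True) n α β := by
  induction h with
  | refl => exact ⟨0, PathP.refl _⟩
  | tail hab hbc ih =>
    obtain ⟨n, p⟩ := ih
    obtain ⟨j, mv⟩ := isBraidMove_iff_moveAt.mp hbc
    exact ⟨n + 1, p.snoc trivial mv⟩

section WithCS

variable (cs : CoxeterSystem M₀ W₀)

lemma braid_eq {s t : B₀} (h : M₀ s t = 3) :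
    cs.simple s * cs.simple t * cs.simple s = cs.simple t * cs.simple s * cs.simple t := by
  set a := cs.simple s with ha_def
  set b := cs.simple t with hb_def
  have ha : a * a = 1 := cs.simple_mul_simple_self s
  have hb : b * b = 1 := cs.simple_mul_simple_self t
  have h1 : (a * b) ^ 3 = 1 := by
    have := cs.simple_mul_simple_pow s t
    rwa [h] at this
  have key : a * (b * (a * (b * (a * b)))) = 1 := by
    rw [pow_three] at h1
    calc a * (b * (a * (b * (a * b)))) = a * b * (a * b * (a * b)) := by
          simp only [mul_assoc]
      _ = 1 := h1
  have ha' : ∀ x : W₀, a * (a * x) = x := fun x => by rw [← mul_assoc, ha, one_mul]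
  have hb' : ∀ x : W₀, b * (b * x) = x := fun x => by rw [← mul_assoc, hb, one_mul]
  have := congrArg (fun x : W₀ => x * (b * (a * b))) key
  simp only [one_mul] at this
  calc a * b * a = a * (b * (a * (b * (a * b)))) * (b * (a * b)) := by
        simp only [mul_assoc, ha', hb', hb, mul_one]
    _ = b * (a * b) := this
    _ = b * a * b := by rw [mul_assoc]

lemma MoveAt.wordProd_eq {j : ℕ} {w w' : List B₀} (h : MoveAt M₀ j w w') :
    cs.wordProd w' = cs.wordProd w := by
  obtain ⟨u, v, s, t, hu, h3, rfl, rfl⟩ := h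
  simp only [CoxeterSystem.wordProd_append, CoxeterSystem.wordProd_cons,
    CoxeterSystem.wordProd_nil, mul_one]
  have hb := braid_eq cs h3
  have hb' : ∀ x : W₀, cs.simple t * (cs.simple s * (cs.simple t * x)) =
      cs.simple s * (cs.simple t * (cs.simple s * x)) := by
    intro x
    calc cs.simple t * (cs.simple s * (cs.simple t * x))
        = (cs.simple t * cs.simple s * cs.simple t) * x := by simp only [mul_assoc]
      _ = (cs.simple s * cs.simple t * cs.simple s) * x := by rw [hb]
      _ = cs.simple s * (cs.simple t * (cs.simple s * x)) := by simp only [mul_assoc]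
  simp only [mul_assoc] at hb' ⊢
  rw [hb' (cs.wordProd v)]

lemma MoveAt.isReduced {j : ℕ} {w w' : List B₀} (h : MoveAt M₀ j w w')
    (hr : cs.IsReduced w) : cs.IsReduced w' := by
  have hr' : cs.length (cs.wordProd w) = w.length := hr
  show cs.length (cs.wordProd w') = w'.length
  rw [h.wordProd_eq cs, h.length_eq, hr']

lemma PathP.isReduced {P : ℕ → Prop} {n : ℕ} {w w' : List B₀}
    (h : PathP M₀ P n w w') (hr : cs.IsReduced w) : cs.IsReduced w' := by
  induction h with
  | refl w => exact hr
  | cons hj hm hp ih => exact ih (hm.isReduced cs hr)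

/-- A reduced word cannot contain consecutive letters `s, t, s, t` with `m(s,t) = 3`. -/
lemma no_stst {w : List B₀} {k : ℕ} {s t : B₀}
    (hred : cs.IsReduced w) (h3 : M₀ s t = 3)
    (h0 : w[k]? = some s) (h1 : w[k+1]? = some t)
    (h2 : w[k+2]? = some s) (h4 : w[k+3]? = some t) : False := by
  obtain ⟨hl3, he3⟩ := List.getElem?_eq_some_iff.mp h4
  obtain ⟨hl0, he0⟩ := List.getElem?_eq_some_iff.mp h0
  obtain ⟨hl1, he1⟩ := List.getElem?_eq_some_iff.mp h1
  obtain ⟨hl2, he2⟩ := List.getElem?_eq_some_iff.mp h2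
  have hw : w = w.take k ++ (s :: t :: s :: t :: w.drop (k+4)) := by
    conv_lhs => rw [← List.take_append_drop k w]
    congr 1
    rw [List.drop_eq_getElem_cons (show k < w.length by omega), he0]
    congr 1
    rw [List.drop_eq_getElem_cons (show k + 1 < w.length by omega), he1]
    congr 1
    rw [List.drop_eq_getElem_cons (show k + 2 < w.length by omega), he2]
    congr 1
    rw [List.drop_eq_getElem_cons (show k + 3 < w.length by omega), he3]
  have hπ : cs.wordProd w = cs.wordProd (w.take k ++ (t :: s :: w.drop (k+4))) := by
    conv_lhs => rw [hw]
    rw [CoxeterSystem.wordProd_append, CoxeterSystem.wordProd_append]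
    congr 1
    simp only [CoxeterSystem.wordProd_cons]
    set a := cs.simple s
    set b := cs.simple t
    have hb2 : b * b = 1 := cs.simple_mul_simple_self t
    have habab : a * b * a * b = b * a := by
      rw [braid_eq cs h3, mul_assoc, hb2, mul_one]
    calc a * (b * (a * (b * cs.wordProd (w.drop (k+4)))))
        = (a * b * a * b) * cs.wordProd (w.drop (k+4)) := by simp only [mul_assoc]
      _ = (b * a) * cs.wordProd (w.drop (k+4)) := by rw [habab]
      _ = b * (a * cs.wordProd (w.drop (k+4))) := by rw [mul_assoc]
  have hred' : cs.length (cs.wordProd w) = w.length := hred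
  have hle : cs.length (cs.wordProd w) ≤ (w.take k ++ (t :: s :: w.drop (k+4))).length := by
    rw [hπ]; exact cs.length_wordProd_le _
  simp only [List.length_append, List.length_take, List.length_cons, List.length_drop] at hle
  omega

/-- Splitting off the first braid move at a position in `{k-1, k, k+1}`, if any. -/
lemma midsplit {k : ℕ} : ∀ {n : ℕ} {w γ : List B₀}, PathP M₀ (fun _ => True) n w γ →
    PathP M₀ (fun j => j + 2 ≤ k ∨ k + 2 ≤ j) n w γ ∨
    ∃ (t₀ j : ℕ) (σ δ : List B₀), t₀ + 1 ≤ n ∧ (j + 1 = k ∨ j = k ∨ j = k + 1) ∧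
      PathP M₀ (fun _ => True) t₀ w σ ∧ MoveAt M₀ j σ δ ∧
      PathP M₀ (fun _ => True) (n - (t₀ + 1)) δ γ := by
  intro n w γ hp
  induction hp with
  | refl w => exact Or.inl (PathP.refl w)
  | @cons j n w δ γ hj hm hp ih =>
    by_cases hmid : j + 1 = k ∨ j = k ∨ j = k + 1
    · refine Or.inr ⟨0, j, w, δ, by omega, hmid, PathP.refl w, hm, ?_⟩
      exact hp.cast (by omega)
    · rcases ih with hfree | ⟨t₀, j', σ, δ', ht, hmid', hpre, hmv, hsuf⟩
      · exact Or.inl (PathP.cons (by omega) hm hfree)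
      · exact Or.inr ⟨t₀ + 1, j', σ, δ', by omega, hmid', PathP.cons trivial hm hpre, hmv,
          hsuf.cast (by omega)⟩

lemma path_cell_k1 {k : ℕ} {n : ℕ} {w γ : List B₀}
    (hp : PathP M₀ (fun j => j + 2 ≤ k ∨ k + 2 ≤ j) n w γ) : γ[k+1]? = w[k+1]? := by
  induction hp with
  | refl w => rfl
  | @cons j n w δ γ hj hm hp ih =>
    rw [ih]
    rcases hj with hL | hR
    · exact hm.getElem?_ge (by omega)
    · exact hm.getElem?_lt (by omega)

lemma pathR_transport {k : ℕ} : ∀ {m : ℕ} {w₁ w₂ : List B₀},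
    PathP M₀ (fun j => k + 2 ≤ j) m w₁ w₂ → ∀ p : List B₀, p.length = k + 2 →
    PathP M₀ (fun j => k + 2 ≤ j) m (p ++ w₁.drop (k+2)) (p ++ w₂.drop (k+2)) := by
  intro m w₁ w₂ hp
  induction hp with
  | refl w => intro p hlp; exact PathP.refl _
  | @cons j n w δ γ hj hm hp ih =>
    intro p hlp
    exact PathP.cons hj (hm.transport hj p hlp) (ih p hlp)

/-- Projection of a path avoiding positions `k-1, k, k+1` onto the positions `≥ k+2`. -/
lemma gproj {k : ℕ} : ∀ {n : ℕ} {w γ : List B₀},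
    PathP M₀ (fun j => j + 2 ≤ k ∨ k + 2 ≤ j) n w γ → k + 2 ≤ w.length →
    ∃ m ≤ n, PathP M₀ (fun j => k + 2 ≤ j) m w (w.take (k+2) ++ γ.drop (k+2)) := by
  intro n w γ hp
  induction hp with
  | refl w =>
    intro hlen
    refine ⟨0, le_refl 0, ?_⟩
    rw [List.take_append_drop]
    exact PathP.refl w
  | @cons j n w δ γ hj hm hp ih =>
    intro hlen
    have hδlen : δ.length = w.length := hm.length_eq
    obtain ⟨m, hmn, hpr⟩ := ih (by omega)
    rcases hj with hL | hR
    · -- a move on the left: transport the projected path to the prefix of `w`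
      have hdrop : δ.drop (k+2) = w.drop (k+2) := hm.drop_eq (by omega)
      have htlen : (w.take (k+2)).length = k + 2 := by
        rw [List.length_take]; omega
      have h2 : (δ.take (k+2) ++ γ.drop (k+2)).drop (k+2) = γ.drop (k+2) := by
        have hδt : (δ.take (k+2)).length = k + 2 := by rw [List.length_take]; omega
        rw [List.drop_append_of_le_length hδt.ge, List.drop_eq_nil_of_le hδt.le,
          List.nil_append]
      have hPr2 := pathR_transport hpr (w.take (k+2)) htlen
      rw [hdrop, List.take_append_drop, h2] at hPr2
      exact ⟨m, by omega, hPr2⟩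
    · -- a move on the right
      have htake : δ.take (k+2) = w.take (k+2) := hm.take_eq (by omega)
      rw [htake] at hpr
      exact ⟨m + 1, by omega, PathP.cons hR hm hpr⟩

/-- The key sub-induction: a path using only moves at positions `≥ k+2`, starting from a word
with letters `s, t, s` at positions `k, k+1, k+2`, cannot reach a word with a shadow
at position `k+1`. -/
lemma sub {k : ℕ} {s t : B₀} (hst : M₀ s t = 3) (N : ℕ)
    (IH : ∀ m < N, ∀ (K : ℕ) (β γ : List B₀), cs.IsReduced β →
      PathP M₀ (fun _ => True) m β γ → HasShadowAt M₀ β K → HasShadowAt M₀ γ (K+1) → False) :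
    ∀ (m : ℕ) (β γ : List B₀), PathP M₀ (fun j => k + 2 ≤ j) m β γ → m ≤ N →
      cs.IsReduced β → β[k]? = some s → β[k+1]? = some t → β[k+2]? = some s →
      HasShadowAt M₀ γ (k+1) → False := by
  intro m β γ hpath
  induction hpath with
  | refl w =>
    intro hm hred h0 h1 h2 hsh
    obtain ⟨s', t', h3', c1, c2, c3⟩ := hsh
    rw [h1] at c1
    injection c1 with c1
    subst c1
    exact no_stst cs hred hst h0 h1 h2 c3
  | @cons j n w δ γ hj hm hp ih =>
    intro hmn hred h0 h1 h2 hsh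
    rcases Nat.lt_or_ge (k + 2) j with hgt | hle
    · -- j ≥ k+3 : the cells k, k+1, k+2 are untouched
      have e0 : δ[k]? = some s := by rw [hm.getElem?_lt (by omega)]; exact h0
      have e1 : δ[k+1]? = some t := by rw [hm.getElem?_lt (by omega)]; exact h1
      have e2 : δ[k+2]? = some s := by rw [hm.getElem?_lt (by omega)]; exact h2
      exact ih (by omega) (hm.isReduced cs hred) e0 e1 e2 hsh
    · -- j = k+2
      have hj2 : j = k + 2 := by omega
      subst hj2
      have hδsh : HasShadowAt M₀ δ (k+2) := hm.shadow_tgt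
      have hγred : cs.IsReduced γ := hp.isReduced cs (hm.isReduced cs hred)
      exact IH n (by omega) (k+1) γ δ hγred
        ((hp.symm).mono (fun _ _ => trivial)) hsh hδsh

/-- Main lemma: along any path of braid moves between reduced words, a shadow at position `k`
at the start and a shadow at position `k+1` at the end are incompatible. -/
lemma main_no_overlap : ∀ (n k : ℕ) (β γ : List B₀), cs.IsReduced β →
    PathP M₀ (fun _ => True) n β γ →
    HasShadowAt M₀ β k → HasShadowAt M₀ γ (k+1) → False := by
  intro n
  induction n using Nat.strong_induction_on with
  | _ n IH =>
    intro k β γ hred hpath hsh hsh'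
    obtain ⟨s, t, hst, hb0, hb1, hb2⟩ := hsh
    rcases midsplit hpath with hfree | ⟨t₀, j, σ, δ, ht₀, hmid, hpre, hmove, hsuf⟩
    · -- no move at positions k-1, k, k+1
      obtain ⟨u, v, huv, hg1, hg2, hg3⟩ := hsh'
      have hlen : γ.length = β.length := hfree.length_eq
      have hk3 : k + 3 < γ.length := (List.getElem?_eq_some_iff.mp hg3).1
      have hcell : γ[k+1]? = β[k+1]? := path_cell_k1 hfree
      have hut : u = t := by
        rw [hg1, hb1] at hcell
        injection hcell
      subst hut
      obtain ⟨m, hmn, hpr⟩ := gproj hfree (by omega)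
      set τ := β.take (k+2) ++ γ.drop (k+2) with hτ
      have htlen : (β.take (k+2)).length = k + 2 := by rw [List.length_take]; omega
      have hτ1 : τ[k+1]? = some u := by
        rw [hτ, List.getElem?_append_left (by omega), List.getElem?_take, if_pos (by omega), hb1]
      have hτ2 : τ[k+2]? = some v := by
        rw [hτ, List.getElem?_append_right (by omega), htlen, List.getElem?_drop]
        simpa using hg2
      have hτ3 : τ[k+3]? = some u := by
        rw [hτ, List.getElem?_append_right (by omega), htlen, List.getElem?_drop]
        have : k + 2 + (k + 3 - (k + 2)) = k + 3 := by omega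
        rw [this]
        exact hg3
      exact sub cs hst n IH m β τ hpr hmn hred hb0 hb1 hb2 ⟨u, v, huv, hτ1, hτ2, hτ3⟩
    · -- there is a move at position j ∈ {k-1, k, k+1}
      have hσred : cs.IsReduced σ := hpre.isReduced cs hred
      rcases hmid with h | h | h
      · -- j + 1 = k : reversed prefix gives a shorter counterexample
        exact IH t₀ (by omega) j σ β hσred hpre.symm hmove.shadow_src
          (h.symm ▸ ⟨s, t, hst, hb0, hb1, hb2⟩)
      · -- j = k
        subst h
        rcases Nat.eq_zero_or_pos t₀ with h0 | h0
        · subst h0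
          cases hpre
          exact IH (n - 1) (by omega) j δ γ (hmove.isReduced cs hσred)
            (hsuf.cast (by omega)) hmove.shadow_tgt hsh'
        · have hσγ : PathP M₀ (fun _ => True) (n - t₀) σ γ :=
            (PathP.cons trivial hmove hsuf).cast (by omega)
          exact IH (n - t₀) (by omega) j σ γ hσred hσγ hmove.shadow_src hsh'
      · -- j = k + 1
        subst h
        exact IH t₀ (by omega) k β σ hred hpre ⟨s, t, hst, hb0, hb1, hb2⟩ hmove.shadow_src

end WithCS

end NoOverlapProof

/-- In a simply-laced Coxeter system, braid shadows of a braid class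
cannot overlap in two consecutive positions. -/
theorem statement_0 {B W : Type*} [Group W] {M : CoxeterMatrix B}
    (cs : CoxeterSystem M W) (hsl : SimplyLaced M)
    (w : W) (α : List B) (hw : cs.wordProd α = w) (hred : cs.IsReduced α)
    (i : ℕ) (hi : ClassHasShadowAt M α i) :
    ¬ ClassHasShadowAt M α (i + 1) := by
  intro hcontra
  obtain ⟨β, hβ, hβsh⟩ := hi
  obtain ⟨γ, hγ, hγsh⟩ := hcontra
  obtain ⟨n1, p1⟩ := braidEquiv_pathP hβ
  obtain ⟨n2, p2⟩ := braidEquiv_pathP hγ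
  have pβγ : PathP M (fun _ => True) (n1 + n2) β γ := p1.symm.append p2
  have hβred : cs.IsReduced β := p1.isReduced cs hred
  exact main_no_overlap cs (n1 + n2) i β γ hβred pβγ hβsh hγsh


end BraidFormal
end

section
/- In a simply-laced triangle-free Coxeter system, if α and β are braid equivalent reduced expressions for the same element w with ℓ(w) ≥ 3, and ⟦i,i+2⟧ is a braid shadow of both α and β, then the set of generators appearing in positions i, i+1, i+2 of α equals the set of generators appearing in positions i, i+1, i+2 of β. -/
open List

namespace BraidFormal

variable {B : Type*}

variable {W : Type*} [Group W] {M : CoxeterMatrix B}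

/-!
Join `α` to `β` by a chain of braid moves `γ 0 → γ 1 → ⋯ → γ N`, all through reduced words.
By strong induction on `N` we show at once that a shadow of `γ 0` at `q` is never matched by a
shadow of `γ N` at `q + 1`, and that shadows of both at `q` carry the same two letters; the
induction hypothesis covers every pair `γ i, γ j` with `|i - j| < N`.

For the first claim, the hypothesis rules out moves starting at `q - 1, …, q + 2`. So positions
`q + 1, q + 2` stay `t, s`, and no move crosses the cut before position `q + 3`, which keeps the
product of the prefix of length `q + 3` fixed. Splicing the prefix `⋯ s t s` of `γ 0` onto the
suffix `t ⋯` of `γ N` then gives a reduced word containing `s t s t`, which is impossible.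

For the second claim, either some move swaps the two letters at `q` (then we concatenate), or
position `q + 1` stays `t`. In that case the letter at `q + 2` changes only through moves at
`q + 2`. All of them have the window `{s, u}` of the first one, so the letter stays in `{s, u}`,
and ending at `u` would make `s, t, u` a triangle.
-/

lemma ne_of_coxeterMatrix_eq_three {s t : B} (h : M s t = 3) : s ≠ t := by
  rintro rfl
  simp at h

lemma wordProd_braid_eq_of_eq_three (cs : CoxeterSystem M W) {s t : B} (h : M s t = 3) :
    cs.wordProd [s, t, s] = cs.wordProd [t, s, t] := by
  have h' : M t s = 3 := M.symmetric s t ▸ h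
  have := cs.wordProd_braidWord_eq t s
  rwa [CoxeterSystem.braidWord, CoxeterSystem.braidWord, h, h'] at this

lemma not_isReduced_of_getElem?_eq_stst (cs : CoxeterSystem M W) {s t : B} (hst : M s t = 3)
    {w : List B} {q : ℕ} (h₀ : w[q]? = some s) (h₁ : w[q + 1]? = some t)
    (h₂ : w[q + 2]? = some s) (h₃ : w[q + 3]? = some t) : ¬ cs.IsReduced w := by
  intro hw
  have hfactor : (w.drop q).take 4 = CoxeterSystem.alternatingWord s t 4 := by
    apply List.ext_getElem?
    rintro (_ | _ | _ | _ | n) <;>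
      simp [CoxeterSystem.alternatingWord, List.getElem?_drop, *]
  have := (hw.drop q).take 4
  rw [hfactor] at this
  exact cs.not_isReduced_alternatingWord s t (by omega) (by omega) this

lemma isReduced_append_of_wordProd_eq (cs : CoxeterSystem M W) {u u' v : List B}
    (h : cs.IsReduced (u ++ v)) (hprod : cs.wordProd u' = cs.wordProd u)
    (hlen : u'.length = u.length) : cs.IsReduced (u' ++ v) := by
  unfold CoxeterSystem.IsReduced at *
  rwa [cs.wordProd_append, List.length_append, hprod, hlen, ← cs.wordProd_append,
    ← List.length_append]

def IsBraidMoveAt (M : CoxeterMatrix B) (j : ℕ) (w w' : List B) : Prop :=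
  ∃ (u v : List B) (s t : B), M s t = 3 ∧ u.length = j ∧
    w = u ++ [s, t, s] ++ v ∧ w' = u ++ [t, s, t] ++ v

lemma isBraidMove_iff_exists_isBraidMoveAt {w w' : List B} :
    IsBraidMove M w w' ↔ ∃ j, IsBraidMoveAt M j w w' := by
  constructor
  · rintro ⟨u, v, s, t, hst, rfl, rfl⟩
    exact ⟨u.length, u, v, s, t, hst, rfl, rfl, rfl⟩
  · rintro ⟨j, u, v, s, t, hst, -, rfl, rfl⟩
    exact ⟨u, v, s, t, hst, rfl, rfl⟩

def window (w : List B) (q : ℕ) : Sym2 (Option B) := s(w[q]?, w[q + 1]?)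

namespace IsBraidMoveAt

variable {j : ℕ} {w w' : List B}

lemma symm (h : IsBraidMoveAt M j w w') : IsBraidMoveAt M j w' w := by
  obtain ⟨u, v, s, t, hst, hu, rfl, rfl⟩ := h
  exact ⟨u, v, t, s, M.symmetric s t ▸ hst, hu, rfl, rfl⟩

lemma exists_letters (h : IsBraidMoveAt M j w w') : ∃ s t : B, M s t = 3 ∧
    w[j]? = some s ∧ w[j + 1]? = some t ∧ w[j + 2]? = some s ∧
    w'[j]? = some t ∧ w'[j + 1]? = some s ∧ w'[j + 2]? = some t := by
  obtain ⟨u, v, s, t, hst, rfl, rfl, rfl⟩ := h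
  refine ⟨s, t, hst, ?_⟩
  simp

lemma getElem?_eq_of_lt_or_lt (h : IsBraidMoveAt M j w w') {k : ℕ} (hk : k < j ∨ j + 2 < k) :
    w'[k]? = w[k]? := by
  obtain ⟨u, v, s, t, -, rfl, rfl, rfl⟩ := h
  rcases hk with hk | hk
  · simp [List.getElem?_append_left hk]
  · have hu (x : List B) (hx : x.length = 3) : (u ++ x ++ v)[k]? = v[k - (u.length + 3)]? := by
      rw [List.getElem?_append_right (by simp [hx]; omega), List.length_append, hx]
    rw [hu _ rfl, hu _ rfl]

lemma hasShadowAt_left (h : IsBraidMoveAt M j w w') : HasShadowAt M w j := by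
  obtain ⟨s, t, hst, h₀, h₁, h₂, -⟩ := h.exists_letters
  exact ⟨s, t, hst, h₀, h₁, h₂⟩

lemma hasShadowAt_right (h : IsBraidMoveAt M j w w') : HasShadowAt M w' j :=
  h.symm.hasShadowAt_left

lemma getElem?_eq_getElem?_succ (h : IsBraidMoveAt M j w w') : w'[j]? = w[j + 1]? := by
  obtain ⟨s, t, -, -, h₁, -, h₀', -⟩ := h.exists_letters
  rw [h₀', h₁]

lemma window_eq (h : IsBraidMoveAt M j w w') : window w j = window w' j := by
  obtain ⟨s, t, -, h₀, h₁, -, h₀', h₁', -⟩ := h.exists_letters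
  rw [window, window, h₀, h₁, h₀', h₁', Sym2.eq_swap]

lemma isReduced_iff (cs : CoxeterSystem M W) (h : IsBraidMoveAt M j w w') :
    cs.IsReduced w' ↔ cs.IsReduced w := by
  obtain ⟨u, v, s, t, hst, -, rfl, rfl⟩ := h
  simp only [CoxeterSystem.IsReduced, cs.wordProd_append,
    wordProd_braid_eq_of_eq_three cs hst, List.length_append, List.length_cons]

lemma wordProd_take_eq (cs : CoxeterSystem M W) (h : IsBraidMoveAt M j w w') {c : ℕ}
    (hc : j + 3 ≤ c ∨ c ≤ j) : cs.wordProd (w'.take c) = cs.wordProd (w.take c) := by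
  obtain ⟨u, v, s, t, hst, rfl, rfl, rfl⟩ := h
  rcases hc with hc | hc
  · obtain ⟨n, rfl⟩ : ∃ n, c = (u ++ [s, t, s]).length + n :=
      ⟨c - u.length - 3, by simp; omega⟩
    rw [List.take_length_add_append, show (u ++ [s, t, s]).length = (u ++ [t, s, t]).length by simp,
      List.take_length_add_append]
    simp only [cs.wordProd_append, wordProd_braid_eq_of_eq_three cs hst]
  · simp [List.take_append, hc]

end IsBraidMoveAt

def IsBraidChain (M : CoxeterMatrix B) (γ : ℕ → List B) (N : ℕ) : Prop :=
  ∀ k < N, ∃ j, IsBraidMoveAt M j (γ k) (γ (k + 1))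

lemma exists_isBraidChain_of_braidEquiv {α β : List B} (h : BraidEquiv M α β) :
    ∃ N γ, IsBraidChain M γ N ∧ γ 0 = α ∧ γ N = β := by
  induction h using Relation.ReflTransGen.head_induction_on with
  | refl => exact ⟨0, fun _ => β, fun k hk => absurd hk k.not_lt_zero, rfl, rfl⟩
  | @head α γ₀ hmove _ ih =>
    obtain ⟨N, γ, hγ, h₀, hN⟩ := ih
    refine ⟨N + 1, fun | 0 => α | k + 1 => γ k, ?_, rfl, hN⟩
    rintro (_ | k) hk
    · rw [← h₀] at hmove
      exact isBraidMove_iff_exists_isBraidMoveAt.1 hmove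
    · exact hγ k (by omega)

namespace IsBraidChain

variable {γ : ℕ → List B} {N : ℕ}

lemma mono (h : IsBraidChain M γ N) {N' : ℕ} (hN' : N' ≤ N) : IsBraidChain M γ N' :=
  fun k hk => h k (by omega)

lemma exists_between (h : IsBraidChain M γ N) {i j : ℕ} (hi : i ≤ N) (hj : j ≤ N) :
    ∃ δ, IsBraidChain M δ (Nat.dist i j) ∧ δ 0 = γ i ∧ δ (Nat.dist i j) = γ j := by
  rcases le_total i j with hij | hij
  · refine ⟨fun m => γ (i + m), fun k hk => h (i + k) ?_, rfl, ?_⟩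
    · rw [Nat.dist_eq_sub_of_le hij] at hk; omega
    · rw [Nat.dist_eq_sub_of_le hij]
      exact congrArg γ (Nat.add_sub_cancel' hij)
  · refine ⟨fun m => γ (i - m), fun k hk => ?_, rfl, ?_⟩
    · rw [Nat.dist_eq_sub_of_le_right hij] at hk
      obtain ⟨p, hp⟩ := h (i - (k + 1)) (by omega)
      rw [show i - (k + 1) + 1 = i - k by omega] at hp
      exact ⟨p, hp.symm⟩
    · rw [Nat.dist_eq_sub_of_le_right hij]
      exact congrArg γ (Nat.sub_sub_self hij)

lemma isReduced (cs : CoxeterSystem M W) (h : IsBraidChain M γ N) (h₀ : cs.IsReduced (γ 0))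
    {k : ℕ} (hk : k ≤ N) : cs.IsReduced (γ k) := by
  induction k with
  | zero => exact h₀
  | succ k ih =>
    obtain ⟨j, hj⟩ := h k (by omega)
    exact (hj.isReduced_iff cs).2 (ih (by omega))

lemma getElem?_mem (h : IsBraidChain M γ N) {p : ℕ} {S : Set (Option B)}
    (h₀ : (γ 0)[p]? ∈ S)
    (hstep : ∀ k < N, ∀ j, IsBraidMoveAt M j (γ k) (γ (k + 1)) → j ≤ p → p ≤ j + 2 →
      (γ (k + 1))[p]? ∈ S)
    {k : ℕ} (hk : k ≤ N) : (γ k)[p]? ∈ S := by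
  induction k with
  | zero => exact h₀
  | succ k ih =>
    obtain ⟨j, hj⟩ := h k (by omega)
    by_cases hp : j ≤ p ∧ p ≤ j + 2
    · exact hstep k (by omega) j hj hp.1 hp.2
    · rw [hj.getElem?_eq_of_lt_or_lt (by omega)]
      exact ih (by omega)

lemma getElem?_eq (h : IsBraidChain M γ N) {p : ℕ}
    (hfar : ∀ k < N, ∀ j, IsBraidMoveAt M j (γ k) (γ (k + 1)) → p < j ∨ j + 2 < p)
    {k : ℕ} (hk : k ≤ N) : (γ k)[p]? = (γ 0)[p]? :=
  h.getElem?_mem (S := {(γ 0)[p]?}) rfl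
    (fun k hk j hj hjp hpj => absurd (hfar k hk j hj) (by omega)) hk

lemma wordProd_take_eq (cs : CoxeterSystem M W) (h : IsBraidChain M γ N) {c : ℕ}
    (hfar : ∀ k < N, ∀ j, IsBraidMoveAt M j (γ k) (γ (k + 1)) → j + 3 ≤ c ∨ c ≤ j)
    {k : ℕ} (hk : k ≤ N) : cs.wordProd ((γ k).take c) = cs.wordProd ((γ 0).take c) := by
  induction k with
  | zero => rfl
  | succ k ih =>
    obtain ⟨j, hj⟩ := h k (by omega)
    rw [hj.wordProd_take_eq cs (hfar k (by omega) j hj), ih (by omega)]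

end IsBraidChain

def ShadowRigid (M : CoxeterMatrix B) (v w : List B) : Prop :=
  ∀ q, HasShadowAt M v q →
    ¬ HasShadowAt M w (q + 1) ∧ (HasShadowAt M w q → window v q = window w q)

def ShortSegmentsShadowRigid (M : CoxeterMatrix B) (γ : ℕ → List B) (N : ℕ) : Prop :=
  ∀ i ≤ N, ∀ j ≤ N, Nat.dist i j < N → ShadowRigid M (γ i) (γ j)

namespace ShortSegmentsShadowRigid

variable {γ : ℕ → List B} {N : ℕ}

lemma move_ne_of_hasShadowAt_zero (ih : ShortSegmentsShadowRigid M γ N) {q : ℕ}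
    (h₀ : HasShadowAt M (γ 0) q) {k j : ℕ} (hk : k < N)
    (hj : IsBraidMoveAt M j (γ k) (γ (k + 1))) : j ≠ q + 1 ∧ j + 1 ≠ q := by
  constructor
  · rintro rfl
    exact (ih 0 (by omega) k hk.le (by unfold Nat.dist; omega) q h₀).1 hj.hasShadowAt_left
  · rintro rfl
    exact (ih k hk.le 0 (by omega) (by unfold Nat.dist; omega) j hj.hasShadowAt_left).1 h₀

lemma move_ne_of_hasShadowAt_last (ih : ShortSegmentsShadowRigid M γ N) {q : ℕ}
    (hN : HasShadowAt M (γ N) (q + 1)) {k j : ℕ} (hk : k < N)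
    (hj : IsBraidMoveAt M j (γ k) (γ (k + 1))) : j ≠ q ∧ j ≠ q + 2 := by
  constructor
  · rintro rfl
    exact (ih (k + 1) hk N le_rfl (by unfold Nat.dist; omega) j hj.hasShadowAt_right).1 hN
  · rintro rfl
    exact (ih N le_rfl (k + 1) hk (by unfold Nat.dist; omega) (q + 1) hN).1 hj.hasShadowAt_right

lemma not_hasShadowAt_succ (cs : CoxeterSystem M W) (ih : ShortSegmentsShadowRigid M γ N)
    (hγ : IsBraidChain M γ N) (hred : cs.IsReduced (γ N)) {q : ℕ}
    (h₀ : HasShadowAt M (γ 0) q) : ¬ HasShadowAt M (γ N) (q + 1) := by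
  intro hN
  have hfar : ∀ k < N, ∀ j, IsBraidMoveAt M j (γ k) (γ (k + 1)) →
      j + 3 ≤ q + 1 ∨ q + 3 ≤ j := by
    intro k hk j hj
    have := ih.move_ne_of_hasShadowAt_zero h₀ hk hj
    have := ih.move_ne_of_hasShadowAt_last hN hk hj
    omega
  obtain ⟨s, t, hst, hs₀, ht₁, hs₂⟩ := h₀
  have ht₃ : (γ N)[q + 3]? = some t := by
    obtain ⟨g, -, -, hg₁, -, hg₃⟩ := hN
    have hfrozen := hγ.getElem?_eq (p := q + 1)
      (fun k hk j hj => by have := hfar k hk j hj; omega) le_rfl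
    rw [hg₁, ht₁] at hfrozen
    rwa [hfrozen] at hg₃
  have hprefix := hγ.wordProd_take_eq cs (c := q + 3)
    (fun k hk j hj => by have := hfar k hk j hj; omega) le_rfl
  have hlen₀ : q + 2 < (γ 0).length := (List.getElem?_eq_some_iff.1 hs₂).1
  have hlenN : q + 3 < (γ N).length := (List.getElem?_eq_some_iff.1 ht₃).1
  set ω := (γ 0).take (q + 3) ++ (γ N).drop (q + 3)
  have hω : cs.IsReduced ω :=
    isReduced_append_of_wordProd_eq cs (by rwa [List.take_append_drop]) hprefix.symm
      (by simp only [List.length_take]; omega)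
  have hu : ((γ 0).take (q + 3)).length = q + 3 := by simp only [List.length_take]; omega
  have hleft : ∀ k < q + 3, ω[k]? = (γ 0)[k]? := fun k hk => by
    rw [List.getElem?_append_left (by rw [hu]; exact hk), List.getElem?_take_of_lt hk]
  have hright : ω[q + 3]? = (γ N)[q + 3]? := by
    rw [List.getElem?_append_right hu.le, hu, Nat.sub_self, List.getElem?_drop, Nat.add_zero]
  exact not_isReduced_of_getElem?_eq_stst cs hst (hleft q (by omega) ▸ hs₀)
    (hleft (q + 1) (by omega) ▸ ht₁) (hleft (q + 2) (by omega) ▸ hs₂) (hright ▸ ht₃) hω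

-- by `ih`, every move at `q + 2` has the window of the move at `k₁`, and brings in a letter of it
lemma getElem?_mem_window (ih : ShortSegmentsShadowRigid M γ N) (hγ : IsBraidChain M γ N)
    {q : ℕ} (hmove : ∀ k < N, ∀ j, IsBraidMoveAt M j (γ k) (γ (k + 1)) → j ≠ q ∧ j ≠ q + 1)
    {k₁ : ℕ} (hk₁N : k₁ < N) (hk₁ : IsBraidMoveAt M (q + 2) (γ k₁) (γ (k₁ + 1)))
    (h₀ : (γ 0)[q + 2]? ∈ window (γ k₁) (q + 2)) :
    (γ N)[q + 2]? ∈ window (γ k₁) (q + 2) := by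
  refine hγ.getElem?_mem (S := {o | o ∈ window (γ k₁) (q + 2)}) h₀
    (fun k hk j hj hjp hpj => ?_) le_rfl
  have := hmove k hk j hj
  obtain rfl : j = q + 2 := by omega
  rw [Set.mem_ofPred_eq, hj.getElem?_eq_getElem?_succ,
    ← (ih k hk.le k₁ hk₁N.le (by unfold Nat.dist; omega) _ hj.hasShadowAt_left).2
      hk₁.hasShadowAt_left]
  exact Sym2.mem_mk_right _ _

lemma eq_of_getElem?_add_two (htf : TriangleFree M) (ih : ShortSegmentsShadowRigid M γ N)
    (hγ : IsBraidChain M γ N) {q : ℕ}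
    (hmove : ∀ k < N, ∀ j, IsBraidMoveAt M j (γ k) (γ (k + 1)) → j ≠ q ∧ j ≠ q + 1)
    {s t x : B} (hst : M s t = 3) (hs : (γ 0)[q + 2]? = some s)
    (hxt : M x t = 3) (hx : (γ N)[q + 2]? = some x) : x = s := by
  classical
  by_cases hmove₂ : ∃ k < N, IsBraidMoveAt M (q + 2) (γ k) (γ (k + 1))
  swap
  · push Not at hmove₂
    have hfrozen := hγ.getElem?_eq (p := q + 2) (fun k hk j hj => by
      have := hmove k hk j hj
      have := hmove₂ k hk
      by_contra
      obtain rfl : j = q + 2 := by omega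
      contradiction) le_rfl
    rw [hx, hs] at hfrozen
    exact Option.some_inj.1 hfrozen
  obtain ⟨k₁, ⟨hk₁N, hk₁⟩, hmin⟩ :
      ∃ k₁, (k₁ < N ∧ IsBraidMoveAt M (q + 2) (γ k₁) (γ (k₁ + 1))) ∧
      ∀ k < k₁, ¬ (k < N ∧ IsBraidMoveAt M (q + 2) (γ k) (γ (k + 1))) :=
    ⟨Nat.find hmove₂, Nat.find_spec hmove₂, fun k hk => Nat.find_min hmove₂ hk⟩
  have hs₁ : (γ k₁)[q + 2]? = some s := by
    rw [(hγ.mono hk₁N.le).getElem?_eq (fun k hk j hj => ?_) le_rfl, hs]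
    have := hmove k (by omega) j hj
    by_contra
    obtain rfl : j = q + 2 := by omega
    exact hmin k hk ⟨by omega, hj⟩
  have hmem := ih.getElem?_mem_window hγ hmove hk₁N hk₁
    (by rw [hs, ← hs₁]; exact Sym2.mem_mk_left _ _)
  obtain ⟨σ, u, hσu, hσ, hu, -⟩ := hk₁.exists_letters
  obtain rfl : σ = s := Option.some_inj.1 (hσ.symm.trans hs₁)
  rw [hx, window, hσ, hu, Sym2.mem_iff, Option.some_inj, Option.some_inj] at hmem
  rcases hmem with rfl | rfl
  · rfl
  · exact absurd hσu (htf σ t x (ne_of_coxeterMatrix_eq_three hst)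
      (ne_of_coxeterMatrix_eq_three (M.symmetric x t ▸ hxt)) (ne_of_coxeterMatrix_eq_three hσu)
      hst (M.symmetric x t ▸ hxt))

lemma window_eq (htf : TriangleFree M) (ih : ShortSegmentsShadowRigid M γ N)
    (hγ : IsBraidChain M γ N) {q : ℕ} (h₀ : HasShadowAt M (γ 0) q)
    (hN : HasShadowAt M (γ N) q) : window (γ 0) q = window (γ N) q := by
  by_cases hmove : ∃ k < N, IsBraidMoveAt M q (γ k) (γ (k + 1))
  · obtain ⟨k, hk, hj⟩ := hmove
    calc window (γ 0) q
        = window (γ k) q :=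
          (ih 0 (by omega) k hk.le (by unfold Nat.dist; omega) q h₀).2 hj.hasShadowAt_left
      _ = window (γ (k + 1)) q := hj.window_eq
      _ = window (γ N) q :=
          (ih (k + 1) hk N le_rfl (by unfold Nat.dist; omega) q hj.hasShadowAt_right).2 hN
  push Not at hmove
  have hfar : ∀ k < N, ∀ j, IsBraidMoveAt M j (γ k) (γ (k + 1)) →
      j ≠ q ∧ j ≠ q + 1 ∧ j + 1 ≠ q := fun k hk j hj => by
    have := ih.move_ne_of_hasShadowAt_zero h₀ hk hj
    exact ⟨fun h => hmove k hk (h ▸ hj), this⟩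
  have hfrozen := hγ.getElem?_eq (p := q + 1)
    (fun k hk j hj => by have := hfar k hk j hj; omega) le_rfl
  obtain ⟨s, t, hst, hs₀, ht₁, hs₂⟩ := h₀
  obtain ⟨x, z, hxz, hx₀, hz₁, hx₂⟩ := hN
  obtain rfl : z = t := Option.some_inj.1 (hz₁.symm.trans (hfrozen.trans ht₁))
  obtain rfl := ih.eq_of_getElem?_add_two htf hγ
    (fun k hk j hj => ⟨(hfar k hk j hj).1, (hfar k hk j hj).2.1⟩) hst hs₂ hxz hx₂
  rw [window, window, hs₀, ht₁, hx₀, hz₁]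

end ShortSegmentsShadowRigid

theorem IsBraidChain.shadowRigid (cs : CoxeterSystem M W) (htf : TriangleFree M)
    {γ : ℕ → List B} {N : ℕ} (hγ : IsBraidChain M γ N) (hred : cs.IsReduced (γ 0)) :
    ShadowRigid M (γ 0) (γ N) := by
  induction N using Nat.strong_induction_on generalizing γ with
  | _ N ih =>
  have hsegments : ShortSegmentsShadowRigid M γ N := by
    intro i hi j hj hij
    obtain ⟨δ, hδ, hδi, hδj⟩ := hγ.exists_between hi hj
    rw [← hδi, ← hδj]
    exact ih _ hij hδ (hδi ▸ hγ.isReduced cs hred hi)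
  exact fun q h₀ => ⟨hsegments.not_hasShadowAt_succ cs hγ (hγ.isReduced cs hred le_rfl) h₀,
    hsegments.window_eq htf hγ h₀⟩

theorem BraidEquiv.shadowRigid (cs : CoxeterSystem M W) (htf : TriangleFree M) {α β : List B}
    (h : BraidEquiv M α β) (hα : cs.IsReduced α) : ShadowRigid M α β := by
  obtain ⟨N, γ, hγ, rfl, rfl⟩ := exists_isBraidChain_of_braidEquiv h
  exact hγ.shadowRigid cs htf hα

lemma HasShadowAt.suppInterval_eq {w : List B} {i : ℕ} (h : HasShadowAt M w i) :
    suppInterval w i (i + 2) = {c | some c ∈ window w i} := by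
  obtain ⟨s, t, -, hs₀, ht₁, hs₂⟩ := h
  ext c
  simp only [suppInterval, window, hs₀, ht₁, Set.mem_ofPred_eq, Sym2.mem_iff, Option.some_inj]
  constructor
  · rintro ⟨k, hik, hki, hk⟩
    obtain rfl | rfl | rfl : k = i ∨ k = i + 1 ∨ k = i + 2 := by omega
    · exact .inl (Option.some_inj.1 (hk.symm.trans hs₀))
    · exact .inr (Option.some_inj.1 (hk.symm.trans ht₁))
    · exact .inl (Option.some_inj.1 (hk.symm.trans hs₂))
  · rintro (rfl | rfl)
    · exact ⟨i, le_rfl, by omega, hs₀⟩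
    · exact ⟨i + 1, by omega, by omega, ht₁⟩

theorem statement_1_general {B W : Type*} [Group W] {M : CoxeterMatrix B}
    (cs : CoxeterSystem M W) (htf : TriangleFree M)
    (α β : List B)
    (hredα : cs.IsReduced α)
    (hequiv : BraidEquiv M α β)
    (i : ℕ) (hsα : HasShadowAt M α i) (hsβ : HasShadowAt M β i) :
    suppInterval α i (i + 2) = suppInterval β i (i + 2) := by
  rw [hsα.suppInterval_eq, hsβ.suppInterval_eq,
    (hequiv.shadowRigid cs htf hredα i hsα).2 hsβ]

/-- the support of a common braid shadow of two braid equivalent reduced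
expressions is the same. -/
theorem statement_1 {B W : Type*} [Group W] {M : CoxeterMatrix B}
    (cs : CoxeterSystem M W) (hsl : SimplyLaced M) (htf : TriangleFree M)
    (w : W) (α β : List B)
    (hα : cs.wordProd α = w) (hredα : cs.IsReduced α)
    (hβ : cs.wordProd β = w) (hredβ : cs.IsReduced β)
    (hlen : 3 ≤ cs.length w)
    (hequiv : BraidEquiv M α β)
    (i : ℕ) (hsα : HasShadowAt M α i) (hsβ : HasShadowAt M β i) :
    suppInterval α i (i + 2) = suppInterval β i (i + 2) :=
  statement_1_general cs htf α β hredα hequiv i hsα hsβ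

end BraidFormal
end

section
/- In a simply-laced triangle-free Coxeter system, let α be a link of rank r ≥ 1. Then ⟦2i−1, 2i+1⟧ is a braid shadow of α if and only if the set of generators appearing in positions 2i−1, 2i, 2i+1 of α equals the set of all generators that can appear in position 2i across the braid class [α]. -/
/-!
Because the braid class of a link has braid shadows only at even positions, a braid move
changes the centre `2 j + 1` of the window `2 j, 2 j + 1, 2 j + 2` only when it is performed on
that window. Starting from a word of the class with a shadow `p q p` there, one carries along
braid moves the invariant that the centre holds a letter `y` of `{p, q}` and that the other
letter `y'` guards both neighbours of the centre: it sits there, or one step further out behind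
a letter braiding with `y'`. Triangle-freeness then forces every shadow on the window to be
`y' y y'`. Hence the class support at the centre is exactly `{p, q}`, and the equivalence
follows because a reduced word never repeats a letter in adjacent positions.
-/

open List

namespace List

variable {α : Type*} {u v w : List α} {a b c : α}

theorem getElem?_append_triple_congr (a' b' c' : α) {n : ℕ}
    (hn : n < u.length ∨ u.length + 3 ≤ n) :
    (u ++ [a, b, c] ++ v)[n]? = (u ++ [a', b', c'] ++ v)[n]? := by
  rcases hn with hn | hn
  · simp [getElem?_append_left hn]
  · obtain ⟨m, rfl⟩ : ∃ m, n = u.length + (m + 3) := ⟨n - u.length - 3, by omega⟩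
    simp [getElem?_append_right]

theorem exists_eq_append_triple {i : ℕ} (h : i + 3 ≤ w.length) :
    ∃ u v a b c, w = u ++ [a, b, c] ++ v ∧ u.length = i := by
  refine ⟨w.take i, w.drop (i + 3), w[i], w[i + 1], w[i + 2], ?_, by simp; omega⟩
  conv_lhs => rw [← take_append_drop i w]
  rw [append_assoc, drop_eq_getElem_cons, drop_eq_getElem_cons, drop_eq_getElem_cons]
  rfl

end List

namespace Set

variable {α : Type*} {a b c p q : α}

theorem pair_eq_pair_of_subset (h : ({a, b} : Set α) ⊆ {p, q}) (hab : a ≠ b) :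
    ({a, b} : Set α) = {p, q} := by
  simp only [insert_subset_iff, singleton_subset_iff, mem_insert_iff, mem_singleton_iff] at h
  rcases h with ⟨rfl | rfl, rfl | rfl⟩ <;> simp_all [pair_comm]

theorem eq_and_sym2_eq_of_triple_eq_pair (h : ({a, b, c} : Set α) = {p, q}) (hab : a ≠ b)
    (hbc : b ≠ c) : c = a ∧ s(a, b) = s(p, q) := by
  simp only [Set.ext_iff, mem_insert_iff, mem_singleton_iff] at h
  have := h a; have := h b; have := h c; have := h p; have := h q
  rw [Sym2.eq_iff]
  grind

end Set

namespace CoxeterMatrix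

variable {B : Type*} (M : CoxeterMatrix B) {a b c d : B}

theorem ne_of_eq_three (h : M a b = 3) : a ≠ b := by
  rintro rfl
  simp at h

theorem apply_eq_of_sym2_eq (h : s(a, b) = s(c, d)) : M a b = M c d := by
  rcases Sym2.eq_iff.mp h with ⟨rfl, rfl⟩ | ⟨rfl, rfl⟩
  exacts [rfl, M.symmetric _ _]

end CoxeterMatrix

theorem CoxeterSystem.IsReduced.ne_of_eq_append {B W : Type*} [Group W] {M : CoxeterMatrix B}
    {cs : CoxeterSystem M W} {u v : List B} {a b : B} (hred : cs.IsReduced (u ++ [a, b] ++ v)) :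
    a ≠ b := by
  rintro rfl
  have hpair : cs.IsReduced [a, a] := by
    simpa using (hred.drop u.length).take 2
  have : cs.length (cs.wordProd [a, a]) = 2 := hpair
  simp [CoxeterSystem.wordProd] at this

namespace BraidFormal

variable {B W : Type*} [Group W] {M : CoxeterMatrix B} {cs : CoxeterSystem M W}
  {u v w w' α β γ : List B} {a b c s t x y y' : B} {j k k' r : ℕ}

theorem suppInterval_append_triple :
    suppInterval (u ++ [a, b, c] ++ v) u.length (u.length + 2) = {a, b, c} := by
  ext x
  simp only [suppInterval, Set.mem_ofPred_eq, Set.mem_insert_iff, Set.mem_singleton_iff]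
  constructor
  · rintro ⟨k, hk₁, hk₂, hx⟩
    rcases (by omega : k = u.length ∨ k = u.length + 1 ∨ k = u.length + 2) with rfl | rfl | rfl
      <;> simp_all
  · rintro (rfl | rfl | rfl)
    exacts [⟨u.length, by omega, by omega, by simp⟩, ⟨u.length + 1, by omega, by omega, by simp⟩,
      ⟨u.length + 2, by omega, by omega, by simp⟩]

theorem hasShadowAt_append_triple_iff :
    HasShadowAt M (u ++ [a, b, c] ++ v) u.length ↔ M a b = 3 ∧ a = c := by
  simp +contextual [HasShadowAt, @eq_comm _ c]

theorem HasShadowAt.exists_eq_append {i : ℕ} (h : HasShadowAt M w i) :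
    ∃ u v a b, M a b = 3 ∧ w = u ++ [a, b, a] ++ v ∧ u.length = i := by
  obtain ⟨_, _, _, _, _, h₂⟩ := id h
  obtain ⟨u, v, a, b, c, rfl, rfl⟩ := List.exists_eq_append_triple (w := w) (i := i)
    (by have := (List.getElem?_eq_some_iff.mp h₂).1; omega)
  obtain ⟨hab, rfl⟩ := hasShadowAt_append_triple_iff.mp h
  exact ⟨u, v, a, b, hab, rfl, rfl⟩

theorem IsBraidMove.symm (h : IsBraidMove M w w') : IsBraidMove M w' w := by
  obtain ⟨u, v, s, t, hst, rfl, rfl⟩ := h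
  exact ⟨u, v, t, s, by rwa [M.symmetric], rfl, rfl⟩

theorem BraidEquiv.symm (h : BraidEquiv M w w') : BraidEquiv M w' w := by
  induction h with
  | refl => exact .refl
  | tail _ hmove ih => exact .head hmove.symm ih

theorem pair_subset_classSupp (hβ : β ∈ BraidClass M α) (hst : M s t = 3)
    (hβeq : β = u ++ [s, t, s] ++ v) : {s, t} ⊆ classSupp M α (u.length + 1) := by
  rw [Set.insert_subset_iff, Set.singleton_subset_iff]
  refine ⟨⟨u ++ [t, s, t] ++ v, .tail hβ ⟨u, v, s, t, hst, hβeq, rfl⟩, by simp⟩, ⟨β, hβ, ?_⟩⟩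
  simp [hβeq]

def Guards (M : CoxeterMatrix B) (w : List B) (x : B) (k k' : ℕ) : Prop :=
  w[k]? = some x ∨ (w[k']? = some x ∧ ∃ c, w[k]? = some c ∧ M x c = 3)

def CenterGuarded (M : CoxeterMatrix B) (j : ℕ) (y y' : B) (w : List B) : Prop :=
  w[2 * j + 1]? = some y ∧ Guards M w y' (2 * j) (2 * j - 1) ∧
    Guards M w y' (2 * j + 2) (2 * j + 3)

theorem Guards.congr (hk : w[k]? = w'[k]?) (hk' : w[k']? = w'[k']?) (h : Guards M w x k k') :
    Guards M w' x k k' := by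
  unfold Guards at *
  rwa [← hk, ← hk']

theorem Guards.of_swap (hst : M s t = 3) (hk : w[k]? = some s) (hk' : w[k']? = some t)
    (hk₂ : w'[k]? = some t) (hk'₂ : w'[k']? = some s) (h : Guards M w x k k') :
    Guards M w' x k k' := by
  rcases h with h | ⟨h, -⟩
  · obtain rfl : s = x := by simpa [hk] using h
    exact .inr ⟨hk'₂, t, hk₂, hst⟩
  · obtain rfl : t = x := by simpa [hk'] using h
    exact .inl hk₂

/-- Otherwise `s`, `y` and the guard would form a triangle. -/
theorem Guards.eq_of_triangleFree (htf : TriangleFree M) (h : Guards M w x k k')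
    (hk : w[k]? = some s) (hsy : M s y = 3) (hyx : M y x = 3) : s = x := by
  by_contra hsx
  rcases h with h | ⟨-, c, hc, hxc⟩
  · exact hsx (by simpa [hk] using h)
  · obtain rfl : c = s := by simpa [hk] using hc.symm
    exact htf c y x (M.ne_of_eq_three hsy) (M.ne_of_eq_three hyx) hsx hsy hyx
      (by rwa [M.symmetric])

theorem CenterGuarded.congr (hw : ∀ n, 2 * j - 1 ≤ n → n ≤ 2 * j + 3 → w[n]? = w'[n]?)
    (h : CenterGuarded M j y y' w) : CenterGuarded M j y y' w' := by
  obtain ⟨hc, hl, hr⟩ := h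
  exact ⟨hw (2 * j + 1) (by omega) (by omega) ▸ hc,
    hl.congr (hw (2 * j) (by omega) (by omega)) (hw (2 * j - 1) le_rfl (by omega)),
    hr.congr (hw (2 * j + 2) (by omega) (by omega)) (hw (2 * j + 3) (by omega) le_rfl)⟩

/-- Since `u.length` is even, the move either misses the positions `2 j - 1, …, 2 j + 3`, or
swaps the letters at one guarded position and its outer neighbour, or is performed on the
window `2 j, 2 j + 1, 2 j + 2` itself, which then swaps the roles of `y` and `y'`. -/
theorem CenterGuarded.braidMove (htf : TriangleFree M) (hyy : M y y' = 3) (hst : M s t = 3)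
    (heven : Even u.length) (h : CenterGuarded M j y y' (u ++ [s, t, s] ++ v)) :
    CenterGuarded M j y y' (u ++ [t, s, t] ++ v) ∨
      CenterGuarded M j y' y (u ++ [t, s, t] ++ v) := by
  have hout (n : ℕ) (hn : n < u.length ∨ u.length + 3 ≤ n) :=
    List.getElem?_append_triple_congr (u := u) (v := v) (a := s) (b := t) (c := s) t s t hn
  obtain ⟨hc, hl, hr⟩ := h
  obtain ⟨i, hi⟩ := heven
  rcases (by omega : (u.length + 3 ≤ 2 * j - 1 ∨ 2 * j + 4 ≤ u.length) ∨ u.length + 2 = 2 * j ∨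
      u.length = 2 * j ∨ u.length = 2 * j + 2) with hfar | hleft | hmid | hright
  · exact .inl (CenterGuarded.congr (fun n _ _ ↦ hout n (by omega)) ⟨hc, hl, hr⟩)
  · refine .inl ⟨hout (2 * j + 1) (by omega) ▸ hc, ?_,
      hr.congr (hout (2 * j + 2) (by omega)) (hout (2 * j + 3) (by omega))⟩
    rw [← hleft, show u.length + 2 - 1 = u.length + 1 by omega] at hl ⊢
    exact hl.of_swap hst (by simp) (by simp) (by simp) (by simp)
  · obtain rfl : t = y := by simpa [← hmid] using hc
    obtain rfl : s = y' :=
      hl.eq_of_triangleFree htf (by simp [← hmid]) hst hyy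
    refine .inr ⟨by simp [← hmid], .inl (by simp [← hmid]), .inl ?_⟩
    rw [show 2 * j + 2 = u.length + 2 by omega]
    simp
  · refine .inl ⟨hout (2 * j + 1) (by omega) ▸ hc,
      hl.congr (hout (2 * j) (by omega)) (hout (2 * j - 1) (by omega)), ?_⟩
    rw [← hright, show 2 * j + 3 = u.length + 1 by omega] at hr ⊢
    exact hr.of_swap hst (by simp) (by simp) (by simp) (by simp)

theorem centerGuarded_of_mem_braidClass {p q : B} (htf : TriangleFree M) (hpq : M p q = 3)
    (heven : ∀ β ∈ BraidClass M α, ∀ i, HasShadowAt M β i → Even i)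
    (hγ : γ ∈ BraidClass M α) (hγc : CenterGuarded M j q p γ)
    (hβ : β ∈ BraidClass M α) : ∃ y y', s(y, y') = s(q, p) ∧ CenterGuarded M j y y' β := by
  have hpath : BraidEquiv M γ β := hγ.symm.trans hβ
  induction hpath with
  | refl => exact ⟨q, p, rfl, hγc⟩
  | tail hγβ hmove ih =>
    obtain ⟨y, y', hyy, hc⟩ := ih (Relation.ReflTransGen.trans hγ hγβ)
    obtain ⟨u, v, s, t, hst, rfl, rfl⟩ := hmove
    have hMyy : M y y' = 3 := by rw [M.apply_eq_of_sym2_eq hyy, M.symmetric, hpq]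
    have hu : Even u.length :=
      heven _ (hγ.trans hγβ) _ (hasShadowAt_append_triple_iff.mpr ⟨hst, rfl⟩)
    rcases hc.braidMove htf hMyy hst hu with hc' | hc'
    exacts [⟨y, y', hyy, hc'⟩, ⟨y', y, Sym2.eq_swap.trans hyy, hc'⟩]

theorem classSupp_eq_pair {p q : B} (htf : TriangleFree M) (hpq : M p q = 3)
    (heven : ∀ β ∈ BraidClass M α, ∀ i, HasShadowAt M β i → Even i)
    (hγ : γ ∈ BraidClass M α) (hγeq : γ = u ++ [p, q, p] ++ v) (hu : u.length = 2 * j) :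
    classSupp M α (2 * j + 1) = {p, q} := by
  refine subset_antisymm ?_ (hu ▸ pair_subset_classSupp hγ hpq hγeq)
  rintro x ⟨β, hβ, hx⟩
  have hγc : CenterGuarded M j q p γ := by
    subst hγeq
    refine ⟨by simp [← hu], .inl (by simp [← hu]), .inl ?_⟩
    rw [show 2 * j + 2 = u.length + 2 by omega]
    simp
  obtain ⟨y, y', hyy, hc, -⟩ := centerGuarded_of_mem_braidClass htf hpq heven hγ hγc hβ
  obtain rfl : y = x := by simpa [hc] using hx
  rcases Sym2.eq_iff.mp hyy with ⟨rfl, -⟩ | ⟨rfl, -⟩ <;> simp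

theorem IsLink.even_of_hasShadowAt (hlink : IsLink cs α r) :
    ∀ β ∈ BraidClass M α, ∀ i, HasShadowAt M β i → Even i := by
  intro β hβ i hi
  obtain ⟨j, -, rfl⟩ := (hlink.2.2 i).mp ⟨β, hβ, hi⟩
  exact even_two_mul j

theorem IsLink.classSupp_eq_pair (htf : TriangleFree M) (hlink : IsLink cs α r) (hj : j < r) :
    ∃ p q, M p q = 3 ∧ classSupp M α (2 * j + 1) = {p, q} := by
  obtain ⟨γ, hγ, hshadow⟩ := (hlink.2.2 (2 * j)).mpr ⟨j, hj, rfl⟩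
  obtain ⟨u, v, p, q, hpq, hγeq, hu⟩ := hshadow.exists_eq_append
  exact ⟨p, q, hpq, BraidFormal.classSupp_eq_pair htf hpq hlink.even_of_hasShadowAt hγ hγeq hu⟩

theorem statement_3_general {B W : Type*} [Group W] {M : CoxeterMatrix B}
    (cs : CoxeterSystem M W) (htf : TriangleFree M)
    (α : List B) (r : ℕ) (hlink : IsLink cs α r)
    (j : ℕ) (hj : j < r) :
    HasShadowAt M α (2 * j) ↔
      suppInterval α (2 * j) (2 * j + 2) = classSupp M α (2 * j + 1) := by
  obtain ⟨p, q, hpq, hsupp⟩ := hlink.classSupp_eq_pair htf hj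
  obtain ⟨hred, hlen, -⟩ := hlink
  obtain ⟨u, v, a, b, c, rfl, hu⟩ := List.exists_eq_append_triple (w := α) (i := 2 * j) (by omega)
  rw [hsupp, ← hu, hasShadowAt_append_triple_iff, suppInterval_append_triple]
  constructor
  · rintro ⟨hab, rfl⟩
    have hsub := pair_subset_classSupp (u := u) (v := v) (α := u ++ [a, b, a] ++ v) .refl hab rfl
    rw [hu, hsupp] at hsub
    rw [Set.insert_comm, Set.pair_eq_singleton, Set.pair_comm]
    exact Set.pair_eq_pair_of_subset hsub (M.ne_of_eq_three hab)
  · intro h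
    have hab : a ≠ b :=
      (show cs.IsReduced (u ++ [a, b] ++ ([c] ++ v)) by simpa using hred).ne_of_eq_append
    have hbc : b ≠ c :=
      (show cs.IsReduced ((u ++ [a]) ++ [b, c] ++ v) by simpa using hred).ne_of_eq_append
    obtain ⟨rfl, hsym⟩ := Set.eq_and_sym2_eq_of_triple_eq_pair h hab hbc
    exact ⟨M.apply_eq_of_sym2_eq hsym ▸ hpq, rfl⟩

/-- `⟦2i-1,2i+1⟧` is a braid shadow of a link `α` iff the support of `α`
over it equals the support of the braid class at its center.  (Here `j + 1` plays the
role of the index `i` of the paper, `1 ≤ i ≤ r`; the 1-based interval `⟦2i-1,2i+1⟧`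
starts at 0-based position `2j`, with center `2j+1`.) -/
theorem statement_3 {B W : Type*} [Group W] {M : CoxeterMatrix B}
    (cs : CoxeterSystem M W) (hsl : SimplyLaced M) (htf : TriangleFree M)
    (α : List B) (r : ℕ) (hlink : IsLink cs α r) (hr : 1 ≤ r)
    (j : ℕ) (hj : j < r) :
    HasShadowAt M α (2 * j) ↔
      suppInterval α (2 * j) (2 * j + 2) = classSupp M α (2 * j + 1) :=
  statement_3_general cs htf α r hlink j hj

end BraidFormal
end

section
/- In a simply-laced triangle-free Coxeter system, suppose α is a link of rank r ≥ 2 with supp_{⟦2i⟧}([α]) = {s,t} and supp_{⟦2i+2⟧}([α]) = {t,u} where m(s,t) = m(t,u) = 3. Then supp_{⟦2i+1⟧}([α]) = {s,t,u}, the letters of α in positions 2i and 2i+2 are distinct, and the letter of α in position 2i+1 is the unique element of {s,t,u} different from the letters in positions 2i and 2i+2. -/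
open List

namespace BraidFormal

variable {B : Type*}

variable {W : Type*} [Group W] {M : CoxeterMatrix B}

/- ===================== Auxiliary lemmas ===================== -/

lemma mid_getElem?₀ (u v : List B) (a b c : B) :
    (u ++ [a, b, c] ++ v)[u.length]? = some a := by
  rw [List.append_assoc, List.getElem?_append_right (Nat.le_refl _)]
  simp

lemma mid_getElem?₁ (u v : List B) (a b c : B) :
    (u ++ [a, b, c] ++ v)[u.length + 1]? = some b := by
  rw [List.append_assoc, List.getElem?_append_right (by omega)]
  simp

lemma mid_getElem?₂ (u v : List B) (a b c : B) :
    (u ++ [a, b, c] ++ v)[u.length + 2]? = some c := by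
  rw [List.append_assoc, List.getElem?_append_right (by omega)]
  simp

lemma outside_getElem? (u v : List B) (a b c a' b' c' : B) {m : ℕ}
    (h : m < u.length ∨ u.length + 3 ≤ m) :
    (u ++ [a, b, c] ++ v)[m]? = (u ++ [a', b', c'] ++ v)[m]? := by
  rcases h with h | h
  · rw [List.append_assoc, List.append_assoc,
      List.getElem?_append_left h, List.getElem?_append_left h]
  · rw [List.append_assoc, List.append_assoc,
      List.getElem?_append_right (by omega : u.length ≤ m),
      List.getElem?_append_right (by omega : u.length ≤ m),
      List.getElem?_append_right (l₁ := [a, b, c]) (by simp; omega),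
      List.getElem?_append_right (l₁ := [a', b', c']) (by simp; omega)]
    simp

lemma decomp2 {β : List B} {m : ℕ} {p q : B}
    (h1 : β[m]? = some p) (h2 : β[m+1]? = some q) :
    β = β.take m ++ [p, q] ++ β.drop (m + 2) := by
  obtain ⟨hm1, e1⟩ := List.getElem?_eq_some_iff.mp h1
  obtain ⟨hm2, e2⟩ := List.getElem?_eq_some_iff.mp h2
  conv_lhs => rw [← List.take_append_drop m β]
  rw [List.drop_eq_getElem_cons hm1, List.drop_eq_getElem_cons hm2, e1, e2]
  simp [List.append_assoc]

lemma decomp3 {β : List B} {m : ℕ} {p q r : B}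
    (h1 : β[m]? = some p) (h2 : β[m+1]? = some q) (h3 : β[m+2]? = some r) :
    β = β.take m ++ [p, q, r] ++ β.drop (m + 3) := by
  obtain ⟨hm1, e1⟩ := List.getElem?_eq_some_iff.mp h1
  obtain ⟨hm2, e2⟩ := List.getElem?_eq_some_iff.mp h2
  obtain ⟨hm3, e3⟩ := List.getElem?_eq_some_iff.mp h3
  conv_lhs => rw [← List.take_append_drop m β]
  rw [List.drop_eq_getElem_cons hm1, List.drop_eq_getElem_cons hm2,
    List.drop_eq_getElem_cons hm3, e1, e2, e3]
  simp [List.append_assoc]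

lemma IsBraidMove.length_eq' {w w' : List B} (h : IsBraidMove M w w') :
    w'.length = w.length := by
  obtain ⟨u, v, s, t, _, rfl, rfl⟩ := h
  simp

lemma BraidEquiv.length_eq' {w w' : List B} (h : BraidEquiv M w w') :
    w'.length = w.length := by
  induction h with
  | refl => rfl
  | tail _ h2 ih => rw [IsBraidMove.length_eq' h2, ih]

lemma simple_cancel (cs : CoxeterSystem M W) (i : B) (w : W) :
    cs.simple i * (cs.simple i * w) = w := by
  rw [← mul_assoc, cs.simple_mul_simple_self, one_mul]

lemma braid3 (cs : CoxeterSystem M W) {a b : B} (h : M a b = 3) :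
    cs.simple a * cs.simple b * cs.simple a = cs.simple b * cs.simple a * cs.simple b := by
  have h1 := cs.simple_mul_simple_pow a b
  rw [h] at h1
  simp only [pow_succ, pow_zero, one_mul] at h1
  have key : cs.simple a * cs.simple b * cs.simple a *
      (cs.simple b * cs.simple a * cs.simple b) = 1 := by
    simp only [mul_assoc] at h1 ⊢
    exact h1
  calc cs.simple a * cs.simple b * cs.simple a
      = cs.simple a * cs.simple b * cs.simple a *
        (cs.simple b * cs.simple a * cs.simple b) *
        (cs.simple b * cs.simple a * cs.simple b) := by
        simp only [mul_assoc, simple_cancel cs, cs.simple_mul_simple_self, mul_one]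
    _ = cs.simple b * cs.simple a * cs.simple b := by rw [key, one_mul]

lemma IsBraidMove.wordProd_eq' (cs : CoxeterSystem M W) {w w' : List B}
    (h : IsBraidMove M w w') : cs.wordProd w' = cs.wordProd w := by
  obtain ⟨u, v, a, b, hab, rfl, rfl⟩ := h
  simp only [cs.wordProd_append, cs.wordProd_cons, cs.wordProd_nil, mul_one]
  congr 2
  simp only [← mul_assoc]
  exact (braid3 cs hab).symm

lemma BraidEquiv.wordProd_eq' (cs : CoxeterSystem M W) {w w' : List B}
    (h : BraidEquiv M w w') : cs.wordProd w' = cs.wordProd w := by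
  induction h with
  | refl => rfl
  | tail _ h2 ih => rw [IsBraidMove.wordProd_eq' cs h2, ih]

lemma BraidEquiv.isReduced' (cs : CoxeterSystem M W) {w w' : List B}
    (h : BraidEquiv M w w') (hred : cs.IsReduced w) : cs.IsReduced w' := by
  have hred' : cs.length (cs.wordProd w) = w.length := hred
  show cs.length (cs.wordProd w') = w'.length
  rw [BraidEquiv.wordProd_eq' cs h, hred', (BraidEquiv.length_eq' h).symm.symm]

lemma not_isReduced_double (cs : CoxeterSystem M W) {β : List B} {m : ℕ} {p : B}
    (h1 : β[m]? = some p) (h2 : β[m+1]? = some p) : ¬ cs.IsReduced β := by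
  intro hred
  have hred' : cs.length (cs.wordProd β) = β.length := hred
  have hm : m + 1 < β.length := (List.getElem?_eq_some_iff.mp h2).1
  have hdec := decomp2 h1 h2
  have hprod : cs.wordProd β = cs.wordProd (β.take m ++ β.drop (m+2)) := by
    conv_lhs => rw [hdec]
    simp only [cs.wordProd_append, cs.wordProd_cons, cs.wordProd_nil, mul_one]
    rw [cs.simple_mul_simple_self, mul_one]
  have hle := cs.length_wordProd_le (β.take m ++ β.drop (m+2))
  rw [← hprod, hred'] at hle
  have hlen2 : (β.take m ++ β.drop (m+2)).length = β.length - 2 := by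
    rw [List.length_append, List.length_take, List.length_drop]; omega
  omega

lemma shadow_realize {α : List B} {i : ℕ} (h : ClassHasShadowAt M α i) :
    ∃ x y : B, M x y = 3 ∧ x ≠ y ∧
      (∃ β ∈ BraidClass M α, β[i]? = some x ∧ β[i+1]? = some y ∧ β[i+2]? = some x) ∧
      (∃ β ∈ BraidClass M α, β[i]? = some y ∧ β[i+1]? = some x ∧ β[i+2]? = some y) := by
  obtain ⟨β, hβ, x, y, hxy3, h0, h1, h2⟩ := h
  have hxy : x ≠ y := by rintro rfl; rw [M.diagonal] at hxy3; omega
  have hilen : i < β.length := (List.getElem?_eq_some_iff.mp h0).1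
  have hdec := decomp3 h0 h1 h2
  have htake : (β.take i).length = i := by rw [List.length_take]; omega
  have hmove : IsBraidMove M β (β.take i ++ [y, x, y] ++ β.drop (i+3)) :=
    ⟨β.take i, β.drop (i+3), x, y, hxy3, hdec, rfl⟩
  refine ⟨x, y, hxy3, hxy, ⟨β, hβ, h0, h1, h2⟩,
    ⟨β.take i ++ [y, x, y] ++ β.drop (i+3), Relation.ReflTransGen.tail hβ hmove, ?_, ?_, ?_⟩⟩
  · have := mid_getElem?₀ (β.take i) (β.drop (i+3)) y x y; rw [htake] at this; exact this
  · have := mid_getElem?₁ (β.take i) (β.drop (i+3)) y x y; rw [htake] at this; exact this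
  · have := mid_getElem?₂ (β.take i) (β.drop (i+3)) y x y; rw [htake] at this; exact this

lemma triple_perm {α : List B}
    (heven : ∀ i, ClassHasShadowAt M α i → ∃ k, i = 2 * k) (j : ℕ)
    {β : List B} (hβ : BraidEquiv M α β) :
    [β[2*j+1]?, β[2*j+2]?, β[2*j+3]?].Perm
      [α[2*j+1]?, α[2*j+2]?, α[2*j+3]?] := by
  induction hβ with
  | refl => exact List.Perm.refl _
  | @tail g g' hab hbc ih =>
    obtain ⟨u, v, a, d, had, hg, hg'⟩ := hbc
    have hsh : ClassHasShadowAt M α u.length := by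
      refine ⟨g, hab, a, d, had, ?_, ?_, ?_⟩
      · rw [hg]; exact mid_getElem?₀ u v a d a
      · rw [hg]; exact mid_getElem?₁ u v a d a
      · rw [hg]; exact mid_getElem?₂ u v a d a
    obtain ⟨k, hk⟩ := heven _ hsh
    have e : ∀ m, (m < u.length ∨ u.length + 3 ≤ m) → g'[m]? = g[m]? := by
      intro m hm; rw [hg, hg']; exact outside_getElem? u v d a d a d a hm
    have hcase : u.length + 3 ≤ 2*j+1 ∨ u.length = 2*j ∨ u.length = 2*j+2 ∨
        2*j+3 < u.length := by omega
    rcases hcase with h | h | h | h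
    · rw [e _ (by omega), e _ (by omega), e _ (by omega)]; exact ih
    · have hg1 : g[2*j+1]? = some d := by rw [hg, ← h]; exact mid_getElem?₁ u v a d a
      have hg2 : g[2*j+2]? = some a := by rw [hg, ← h]; exact mid_getElem?₂ u v a d a
      have hg'1 : g'[2*j+1]? = some a := by rw [hg', ← h]; exact mid_getElem?₁ u v d a d
      have hg'2 : g'[2*j+2]? = some d := by rw [hg', ← h]; exact mid_getElem?₂ u v d a d
      have hg'3 : g'[2*j+3]? = g[2*j+3]? := e _ (by omega)
      rw [hg1, hg2] at ih
      rw [hg'1, hg'2, hg'3]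
      exact List.Perm.trans (List.Perm.swap _ _ _) ih
    · have hg2 : g[2*j+2]? = some a := by
        rw [hg, (by omega : 2*j+2 = u.length)]; exact mid_getElem?₀ u v a d a
      have hg3 : g[2*j+3]? = some d := by
        rw [hg, (by omega : 2*j+3 = u.length + 1)]; exact mid_getElem?₁ u v a d a
      have hg'2 : g'[2*j+2]? = some d := by
        rw [hg', (by omega : 2*j+2 = u.length)]; exact mid_getElem?₀ u v d a d
      have hg'3 : g'[2*j+3]? = some a := by
        rw [hg', (by omega : 2*j+3 = u.length + 1)]; exact mid_getElem?₁ u v d a d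
      have hg'1 : g'[2*j+1]? = g[2*j+1]? := e _ (by omega)
      rw [hg2, hg3] at ih
      rw [hg'1, hg'2, hg'3]
      exact List.Perm.trans (List.Perm.cons _ (List.Perm.swap _ _ _)) ih
    · rw [e _ (by omega), e _ (by omega), e _ (by omega)]; exact ih

lemma tripod {C : Type*} {s t u a c b : C}
    (hst : s ≠ t) (htu : t ≠ u) (hsu : s ≠ u)
    (hs : s = a ∨ s = c ∨ s = b) (ht : t = a ∨ t = c ∨ t = b)
    (hu : u = a ∨ u = c ∨ u = b)
    (ha : a = s ∨ a = t) (hb : b = t ∨ b = u) :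
    a ≠ b ∧ (c = s ∨ c = t ∨ c = u) ∧ c ≠ a ∧ c ≠ b ∧
      (∀ z : C, z = a ∨ z = c ∨ z = b → z = s ∨ z = t ∨ z = u) := by
  rcases hs with rfl | rfl | rfl <;> rcases ht with rfl | rfl | rfl <;>
    rcases hu with rfl | rfl | rfl <;> simp_all <;> tauto

/-- local structure at two overlapping braid shadows of a link.
(Here `j + 1` plays the role of the paper's index `i`, `1 ≤ i ≤ r - 1`; the 1-based
positions `2i, 2i+1, 2i+2` are the 0-based positions `2j+1, 2j+2, 2j+3`.) -/
theorem statement_5 {B W : Type*} [Group W] {M : CoxeterMatrix B}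
    (cs : CoxeterSystem M W) (hsl : SimplyLaced M) (htf : TriangleFree M)
    (α : List B) (r : ℕ) (hlink : IsLink cs α r) (hr : 2 ≤ r)
    (j : ℕ) (hj : j + 2 ≤ r) (s t u : B)
    (hst : M s t = 3) (htu : M t u = 3)
    (h1 : classSupp M α (2 * j + 1) = {s, t})
    (h2 : classSupp M α (2 * j + 3) = {t, u}) :
    classSupp M α (2 * j + 2) = {s, t, u} ∧
    α[2 * j + 1]? ≠ α[2 * j + 3]? ∧
    ∃ a b c : B, α[2 * j + 1]? = some a ∧ α[2 * j + 2]? = some c ∧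
      α[2 * j + 3]? = some b ∧ a ≠ b ∧ c ∈ ({s, t, u} : Set B) ∧ c ≠ a ∧ c ≠ b := by
  obtain ⟨hred, hlen, hshadows⟩ := hlink
  have heven : ∀ i, ClassHasShadowAt M α i → ∃ k, i = 2 * k := by
    intro i hi
    obtain ⟨k, _, hk⟩ := (hshadows i).1 hi
    exact ⟨k, hk⟩
  have hst' : s ≠ t := by rintro rfl; rw [M.diagonal] at hst; omega
  have htu' : t ≠ u := by rintro rfl; rw [M.diagonal] at htu; omega
  have hsh1 : ClassHasShadowAt M α (2*j) := (hshadows _).2 ⟨j, by omega, rfl⟩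
  have hsh2 : ClassHasShadowAt M α (2*j+2) := (hshadows _).2 ⟨j+1, by omega, by omega⟩
  obtain ⟨x, y, hxy3, hxy, ⟨δ, hδ, hδ0, hδ1, hδ2⟩, ⟨δ', hδ'c, hδ'0, hδ'1, hδ'2⟩⟩ :=
    shadow_realize hsh1
  obtain ⟨p, q, hpq3, hpq, ⟨ε, hε, hε0, hε1, hε2⟩, ⟨ε', hε'c, hε'0, hε'1, hε'2⟩⟩ :=
    shadow_realize hsh2
  have hδ1' : δ[2*j+1]? = some y := hδ1
  have hδ2' : δ[2*j+2]? = some x := hδ2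
  have hδ'1' : δ'[2*j+1]? = some x := hδ'1
  have hδ'2' : δ'[2*j+2]? = some y := hδ'2
  have hε1' : ε[2*j+3]? = some q := hε1
  have hε'1' : ε'[2*j+3]? = some p := hε'1
  have hy1 : y ∈ classSupp M α (2*j+1) := ⟨δ, hδ, hδ1'⟩
  have hx1 : x ∈ classSupp M α (2*j+1) := ⟨δ', hδ'c, hδ'1'⟩
  have hx2 : x ∈ classSupp M α (2*j+2) := ⟨δ, hδ, hδ2'⟩
  have hy2 : y ∈ classSupp M α (2*j+2) := ⟨δ', hδ'c, hδ'2'⟩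
  have hp2 : p ∈ classSupp M α (2*j+2) := ⟨ε, hε, hε0⟩
  have hq2 : q ∈ classSupp M α (2*j+2) := ⟨ε', hε'c, hε'0⟩
  have hq3 : q ∈ classSupp M α (2*j+3) := ⟨ε, hε, hε1'⟩
  have hp3 : p ∈ classSupp M α (2*j+3) := ⟨ε', hε'c, hε'1'⟩
  rw [h1] at hx1 hy1
  rw [h2] at hp3 hq3
  simp only [Set.mem_insert_iff, Set.mem_singleton_iff] at hx1 hy1 hp3 hq3
  have hsu : s ≠ u := by
    rintro rfl
    have hεlen : ε.length = α.length := BraidEquiv.length_eq' hε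
    have hlt : 2*j+1 < ε.length := by omega
    obtain ⟨w, hw⟩ : ∃ w, ε[2*j+1]? = some w := ⟨ε[2*j+1], List.getElem?_eq_getElem hlt⟩
    have hwmem : w ∈ classSupp M α (2*j+1) := ⟨ε, hε, hw⟩
    rw [h1] at hwmem
    simp only [Set.mem_insert_iff, Set.mem_singleton_iff] at hwmem
    have hεred : cs.IsReduced ε := BraidEquiv.isReduced' cs hε hred
    have hwp : w ≠ p := by
      rintro rfl
      exact not_isReduced_double cs hw hε0 hεred
    have hwq : w ≠ q := by
      intro hwq
      have hw' : ε[2*j+1]? = some q := by rw [← hwq]; exact hw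
      have hsh' : ClassHasShadowAt M α (2*j+1) :=
        ⟨ε, hε, q, p, (M.symmetric q p).trans hpq3, hw', hε0, hε1'⟩
      obtain ⟨k, hk⟩ := heven _ hsh'
      omega
    rcases hp3 with rfl | rfl <;> rcases hq3 with rfl | rfl <;> simp_all
  have hsmem : s ∈ classSupp M α (2*j+2) := by
    rcases hx1 with rfl | rfl
    · exact hx2
    · rcases hy1 with rfl | rfl
      · exact hy2
      · exact absurd rfl hxy
  have htmem : t ∈ classSupp M α (2*j+2) := by
    rcases hx1 with rfl | rfl
    · rcases hy1 with rfl | rfl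
      · exact absurd rfl hxy
      · exact hy2
    · exact hx2
  have humem : u ∈ classSupp M α (2*j+2) := by
    rcases hp3 with rfl | rfl
    · rcases hq3 with rfl | rfl
      · exact absurd rfl hpq
      · exact hq2
    · exact hp2
  have h1lt : 2*j+1 < α.length := by omega
  have h2lt : 2*j+2 < α.length := by omega
  have h3lt : 2*j+3 < α.length := by omega
  obtain ⟨a₀, hα1⟩ : ∃ z, α[2*j+1]? = some z := ⟨α[2*j+1], List.getElem?_eq_getElem h1lt⟩
  obtain ⟨c₀, hα2⟩ : ∃ z, α[2*j+2]? = some z := ⟨α[2*j+2], List.getElem?_eq_getElem h2lt⟩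
  obtain ⟨b₀, hα3⟩ : ∃ z, α[2*j+3]? = some z := ⟨α[2*j+3], List.getElem?_eq_getElem h3lt⟩
  have ha₀ : a₀ ∈ classSupp M α (2*j+1) := ⟨α, Relation.ReflTransGen.refl, hα1⟩
  have hb₀ : b₀ ∈ classSupp M α (2*j+3) := ⟨α, Relation.ReflTransGen.refl, hα3⟩
  rw [h1] at ha₀
  rw [h2] at hb₀
  simp only [Set.mem_insert_iff, Set.mem_singleton_iff] at ha₀ hb₀
  have hsub : ∀ z ∈ classSupp M α (2*j+2), z = a₀ ∨ z = c₀ ∨ z = b₀ := by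
    rintro z ⟨β, hβ, hz⟩
    have hperm := triple_perm heven j hβ
    have hmem : some z ∈ [α[2*j+1]?, α[2*j+2]?, α[2*j+3]?] := by
      refine hperm.mem_iff.mp ?_
      rw [hz]
      simp
    rw [hα1, hα2, hα3] at hmem
    simpa using hmem
  obtain ⟨hab, hc', hca, hcb, hcover⟩ :=
    tripod hst' htu' hsu (hsub s hsmem) (hsub t htmem) (hsub u humem) ha₀ hb₀
  refine ⟨?_, ?_, a₀, b₀, c₀, hα1, hα2, hα3, hab, ?_, hca, hcb⟩
  · apply Set.eq_of_subset_of_subset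
    · intro z hzmem
      have hz' := hcover z (hsub z hzmem)
      simp only [Set.mem_insert_iff, Set.mem_singleton_iff]
      exact hz'
    · intro z hz
      simp only [Set.mem_insert_iff, Set.mem_singleton_iff] at hz
      rcases hz with rfl | rfl | rfl
      exacts [hsmem, htmem, humem]
  · rw [hα1, hα3]
    simp only [ne_eq, Option.some.injEq]
    exact hab
  · simp only [Set.mem_insert_iff, Set.mem_singleton_iff]
    exact hc'

end BraidFormal
end
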